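/- arXiv:2603.01030 — 3 statements merged into one kernel-verified Lean document; each statement's English description precedes it below -/
import Mathlib

section
/- Let u_r, u_z, v_r, v_z : (0,∞)×ℝ → ℝ be C¹ functions and let û, v̂ be the corresponding revolved vector fields on ℝ³. Then at every point (x,y,z) with ρ := √(x²+y²) > 0, the Frobenius inner product of the Jacobians satisfies Dû(x,y,z) : Dv̂(x,y,z) = ∇u(ρ,z) : ∇v(ρ,z) + u_r(ρ,z)·v_r(ρ,z)/ρ², where u = (u_r,u_z), v = (v_r,v_z) and ∇u, ∇v are their 2×2 Jacobian matrices. In particular ‖Dû‖_F² = ‖∇u‖_F² + (u_r/ρ)². -/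
/-!
Write `c = x / ρ` and `s = y / ρ`. By the chain rule through `(x, y, z) ↦ (ρ, z)`, the rows of `Dû`
are `(∂ᵣu_r c² + (u_r/ρ) s², (∂ᵣu_r - u_r/ρ) c s, ∂_z u_r c)`,
`((∂ᵣu_r - u_r/ρ) c s, ∂ᵣu_r s² + (u_r/ρ) c², ∂_z u_r s)` and `(∂ᵣu_z c, ∂ᵣu_z s, ∂_z u_z)`.
In the orthonormal frame `e_r = (c, s, 0)`, `e_θ = (-s, c, 0)`, `e_z`, this is `∇u` acting on
`span (e_r, e_z)` plus multiplication by `u_r/ρ` on `e_θ`, so the Frobenius product splits as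
`∇u : ∇v + u_r v_r / ρ²`; in coordinates this is a polynomial identity modulo `c² + s² = 1`.
-/

noncomputable section

/-- Partial derivatives of scalar functions on `ℝ²`. -/
def pdr (f : ℝ × ℝ → ℝ) (p : ℝ × ℝ) : ℝ := fderiv ℝ f p (1, 0)
def pdz (f : ℝ × ℝ → ℝ) (p : ℝ × ℝ) : ℝ := fderiv ℝ f p (0, 1)

/-- Partial derivatives of scalar functions on `ℝ³ = ℝ × ℝ × ℝ`. -/
def pdx3 (f : ℝ × ℝ × ℝ → ℝ) (q : ℝ × ℝ × ℝ) : ℝ := fderiv ℝ f q (1, 0, 0)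
def pdy3 (f : ℝ × ℝ × ℝ → ℝ) (q : ℝ × ℝ × ℝ) : ℝ := fderiv ℝ f q (0, 1, 0)
def pdz3 (f : ℝ × ℝ × ℝ → ℝ) (q : ℝ × ℝ × ℝ) : ℝ := fderiv ℝ f q (0, 0, 1)

/-- The Frobenius inner product `∇F : ∇G` of the 2×2 Jacobians of two planar fields. -/
def jdot2 (F G : ℝ × ℝ → ℝ × ℝ) (p : ℝ × ℝ) : ℝ :=
  pdr (fun s => (F s).1) p * pdr (fun s => (G s).1) p +
  pdz (fun s => (F s).1) p * pdz (fun s => (G s).1) p +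
  pdr (fun s => (F s).2) p * pdr (fun s => (G s).2) p +
  pdz (fun s => (F s).2) p * pdz (fun s => (G s).2) p

/-- The Frobenius inner product `DF : DG` of the 3×3 Jacobians of two spatial fields. -/
def jdot3 (F G : ℝ × ℝ × ℝ → ℝ × ℝ × ℝ) (q : ℝ × ℝ × ℝ) : ℝ :=
  pdx3 (fun s => (F s).1) q * pdx3 (fun s => (G s).1) q +
  pdy3 (fun s => (F s).1) q * pdy3 (fun s => (G s).1) q +
  pdz3 (fun s => (F s).1) q * pdz3 (fun s => (G s).1) q +
  pdx3 (fun s => (F s).2.1) q * pdx3 (fun s => (G s).2.1) q +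
  pdy3 (fun s => (F s).2.1) q * pdy3 (fun s => (G s).2.1) q +
  pdz3 (fun s => (F s).2.1) q * pdz3 (fun s => (G s).2.1) q +
  pdx3 (fun s => (F s).2.2) q * pdx3 (fun s => (G s).2.2) q +
  pdy3 (fun s => (F s).2.2) q * pdy3 (fun s => (G s).2.2) q +
  pdz3 (fun s => (F s).2.2) q * pdz3 (fun s => (G s).2.2) q

/-- The revolved vector field `û` on `ℝ³` associated with the meridian field `(u_r, u_z)`. -/
def revolve (ur uz : ℝ × ℝ → ℝ) (q : ℝ × ℝ × ℝ) : ℝ × ℝ × ℝ :=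
  (ur (Real.sqrt (q.1 ^ 2 + q.2.1 ^ 2), q.2.2) * q.1 / Real.sqrt (q.1 ^ 2 + q.2.1 ^ 2),
   ur (Real.sqrt (q.1 ^ 2 + q.2.1 ^ 2), q.2.2) * q.2.1 / Real.sqrt (q.1 ^ 2 + q.2.1 ^ 2),
   uz (Real.sqrt (q.1 ^ 2 + q.2.1 ^ 2), q.2.2))

open ContinuousLinearMap

def meridian (q : ℝ × ℝ × ℝ) : ℝ × ℝ := (√(q.1 ^ 2 + q.2.1 ^ 2), q.2.2)

def grad3 (f : ℝ × ℝ × ℝ → ℝ) (q : ℝ × ℝ × ℝ) : Fin 3 → ℝ := ![pdx3 f q, pdy3 f q, pdz3 f q]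

lemma jdot3_eq_sum_dotProduct_grad3 (F G : ℝ × ℝ × ℝ → ℝ × ℝ × ℝ) (q : ℝ × ℝ × ℝ) :
    jdot3 F G q =
      grad3 (fun s => (F s).1) q ⬝ᵥ grad3 (fun s => (G s).1) q +
      grad3 (fun s => (F s).2.1) q ⬝ᵥ grad3 (fun s => (G s).2.1) q +
      grad3 (fun s => (F s).2.2) q ⬝ᵥ grad3 (fun s => (G s).2.2) q := by
  simp only [jdot3, grad3, dotProduct, Fin.sum_univ_three, Matrix.cons_val_zero,
    Matrix.cons_val_one, Matrix.cons_val]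
  ring

lemma HasFDerivAt.grad3_eq {f : ℝ × ℝ × ℝ → ℝ} {f' : ℝ × ℝ × ℝ →L[ℝ] ℝ} {q : ℝ × ℝ × ℝ}
    {a b c : ℝ} (h : HasFDerivAt f f' q) (ha : f' (1, 0, 0) = a) (hb : f' (0, 1, 0) = b)
    (hc : f' (0, 0, 1) = c) : grad3 f q = ![a, b, c] := by
  rw [grad3, pdx3, pdy3, pdz3, h.fderiv, ha, hb, hc]

lemma fderiv_apply_eq_pdr_add_pdz (f : ℝ × ℝ → ℝ) (p : ℝ × ℝ) (a b : ℝ) :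
    fderiv ℝ f p (a, b) = a * pdr f p + b * pdz f p := by
  have : ((a, b) : ℝ × ℝ) = a • (1, 0) + b • (0, 1) := by simp
  rw [this, map_add, map_smul, map_smul, smul_eq_mul, smul_eq_mul, pdr, pdz]

lemma frobenius_identity_of_sq_add_sq_eq_one (a b c d g a' b' c' d' g' C S : ℝ)
    (h : C ^ 2 + S ^ 2 = 1) :
    ![a * C ^ 2 + g * S ^ 2, (a - g) * C * S, b * C] ⬝ᵥ
        ![a' * C ^ 2 + g' * S ^ 2, (a' - g') * C * S, b' * C] +
      ![(a - g) * C * S, a * S ^ 2 + g * C ^ 2, b * S] ⬝ᵥ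
        ![(a' - g') * C * S, a' * S ^ 2 + g' * C ^ 2, b' * S] +
      ![c * C, c * S, d] ⬝ᵥ ![c' * C, c' * S, d'] =
    a * a' + b * b' + c * c' + d * d' + g * g' := by
  simp only [dotProduct, Fin.sum_univ_three, Matrix.cons_val_zero, Matrix.cons_val_one,
    Matrix.cons_val]
  linear_combination ((a * a' + g * g') * (C ^ 2 + S ^ 2 + 1) + b * b' + c * c') * h

section Cylindrical

variable {x y z ρ : ℝ}

lemma sq_add_sq_eq_sq_of_sqrt_eq (hρ : √(x ^ 2 + y ^ 2) = ρ) : x ^ 2 + y ^ 2 = ρ ^ 2 := by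
  rw [← hρ, Real.sq_sqrt (by positivity)]

lemma meridian_eq (hρ : √(x ^ 2 + y ^ 2) = ρ) : meridian (x, y, z) = (ρ, z) := by
  rw [meridian, hρ]

lemma hasFDerivAt_radius (hρ : √(x ^ 2 + y ^ 2) = ρ) (hρpos : 0 < ρ) :
    HasFDerivAt (fun q : ℝ × ℝ × ℝ => √(q.1 ^ 2 + q.2.1 ^ 2))
      ((x / ρ) • fst ℝ ℝ (ℝ × ℝ) + (y / ρ) • (fst ℝ ℝ ℝ ∘L snd ℝ ℝ (ℝ × ℝ))) (x, y, z) := by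
  have hy : HasFDerivAt (fun q : ℝ × ℝ × ℝ => q.2.1) (fst ℝ ℝ ℝ ∘L snd ℝ ℝ (ℝ × ℝ)) (x, y, z) :=
    (fst ℝ ℝ ℝ ∘L snd ℝ ℝ (ℝ × ℝ)).hasFDerivAt
  have hsq : HasFDerivAt (fun q : ℝ × ℝ × ℝ => q.1 ^ 2 + q.2.1 ^ 2) _ (x, y, z) :=
    (hasFDerivAt_fst.pow 2).add (hy.pow 2)
  refine (hsq.sqrt ?_).congr_fderiv ?_
  · exact (Real.sqrt_pos.1 (hρ.symm ▸ hρpos)).ne'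
  · refine ContinuousLinearMap.ext fun v => ?_
    simp only [hρ, add_apply, smul_apply, comp_apply, coe_fst', coe_snd', smul_eq_mul, nsmul_eq_mul]
    field_simp
    ring

lemma hasFDerivAt_meridian (hρ : √(x ^ 2 + y ^ 2) = ρ) (hρpos : 0 < ρ) :
    HasFDerivAt meridian
      (((x / ρ) • fst ℝ ℝ (ℝ × ℝ) + (y / ρ) • (fst ℝ ℝ ℝ ∘L snd ℝ ℝ (ℝ × ℝ))).prod
        (snd ℝ ℝ ℝ ∘L snd ℝ ℝ (ℝ × ℝ))) (x, y, z) :=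
  (hasFDerivAt_radius hρ hρpos).prodMk (snd ℝ ℝ ℝ ∘L snd ℝ ℝ (ℝ × ℝ)).hasFDerivAt

lemma grad3_revolve_horizontal {ur : ℝ × ℝ → ℝ} (uz : ℝ × ℝ → ℝ)
    (hur : DifferentiableAt ℝ ur (ρ, z)) (hρ : √(x ^ 2 + y ^ 2) = ρ) (hρpos : 0 < ρ) :
    grad3 (fun q => (revolve ur uz q).1) (x, y, z) =
      ![pdr ur (ρ, z) * (x / ρ) ^ 2 + ur (ρ, z) / ρ * (y / ρ) ^ 2,
        (pdr ur (ρ, z) - ur (ρ, z) / ρ) * (x / ρ) * (y / ρ), pdz ur (ρ, z) * (x / ρ)] ∧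
    grad3 (fun q => (revolve ur uz q).2.1) (x, y, z) =
      ![(pdr ur (ρ, z) - ur (ρ, z) / ρ) * (x / ρ) * (y / ρ),
        pdr ur (ρ, z) * (y / ρ) ^ 2 + ur (ρ, z) / ρ * (x / ρ) ^ 2, pdz ur (ρ, z) * (y / ρ)] := by
  have hsum := sq_add_sq_eq_sq_of_sqrt_eq hρ
  have hm : meridian (x, y, z) = (ρ, z) := meridian_eq hρ
  have hu : HasFDerivAt ur (fderiv ℝ ur (ρ, z)) (meridian (x, y, z)) := hm ▸ hur.hasFDerivAt
  have hinv : HasDerivAt (fun t => t⁻¹) (-(ρ ^ 2)⁻¹) √(x ^ 2 + y ^ 2) := by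
    rw [hρ]; exact hasDerivAt_inv hρpos.ne'
  -- `(revolve ur uz q).1` is definitionally `ur (meridian q) * q.1 * (√(q.1 ^ 2 + q.2.1 ^ 2))⁻¹`.
  have hmul_div_radius {ℓ : ℝ × ℝ × ℝ → ℝ} {ℓ' : ℝ × ℝ × ℝ →L[ℝ] ℝ}
      (hℓ : HasFDerivAt ℓ ℓ' (x, y, z)) :=
    ((hu.comp (x, y, z) (hasFDerivAt_meridian hρ hρpos)).mul hℓ).mul
      (hinv.comp_hasFDerivAt (x, y, z) (hasFDerivAt_radius hρ hρpos))
  constructor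
  · refine (hmul_div_radius hasFDerivAt_fst).grad3_eq ?_ ?_ ?_ <;>
      simp only [Pi.mul_apply, Function.comp_apply, hm, hρ, add_apply, smul_apply, comp_apply,
        prod_apply, coe_fst', coe_snd', smul_eq_mul, fderiv_apply_eq_pdr_add_pdz] <;>
      field_simp
    · linear_combination (-ur (ρ, z)) * hsum
    · ring
    · ring
  · refine (hmul_div_radius hasFDerivAt_snd.fst).grad3_eq ?_ ?_ ?_ <;>
      simp only [Pi.mul_apply, Function.comp_apply, hm, hρ, add_apply, smul_apply, comp_apply,
        prod_apply, coe_fst', coe_snd', smul_eq_mul, fderiv_apply_eq_pdr_add_pdz] <;>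
      field_simp
    · ring
    · linear_combination (-ur (ρ, z)) * hsum
    · ring

lemma grad3_comp_meridian {f : ℝ × ℝ → ℝ} (hf : DifferentiableAt ℝ f (ρ, z))
    (hρ : √(x ^ 2 + y ^ 2) = ρ) (hρpos : 0 < ρ) :
    grad3 (fun q => f (meridian q)) (x, y, z) =
      ![pdr f (ρ, z) * (x / ρ), pdr f (ρ, z) * (y / ρ), pdz f (ρ, z)] := by
  have hf' : HasFDerivAt f (fderiv ℝ f (ρ, z)) (meridian (x, y, z)) :=
    meridian_eq hρ ▸ hf.hasFDerivAt
  refine (hf'.comp (x, y, z) (hasFDerivAt_meridian hρ hρpos)).grad3_eq ?_ ?_ ?_ <;>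
    simp only [comp_apply, prod_apply, add_apply, smul_apply, coe_fst', coe_snd', smul_eq_mul,
      fderiv_apply_eq_pdr_add_pdz] <;> ring

lemma jdot3_revolve {ur uz vr vz : ℝ × ℝ → ℝ}
    (hur : DifferentiableAt ℝ ur (ρ, z)) (huz : DifferentiableAt ℝ uz (ρ, z))
    (hvr : DifferentiableAt ℝ vr (ρ, z)) (hvz : DifferentiableAt ℝ vz (ρ, z))
    (hρ : √(x ^ 2 + y ^ 2) = ρ) (hρpos : 0 < ρ) :
    jdot3 (revolve ur uz) (revolve vr vz) (x, y, z) =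
      jdot2 (fun p => (ur p, uz p)) (fun p => (vr p, vz p)) (ρ, z) +
        ur (ρ, z) * vr (ρ, z) / ρ ^ 2 := by
  have hcs : (x / ρ) ^ 2 + (y / ρ) ^ 2 = 1 := by
    rw [div_pow, div_pow, ← add_div, sq_add_sq_eq_sq_of_sqrt_eq hρ, div_self (by positivity)]
  obtain ⟨hu₁, hu₂⟩ := grad3_revolve_horizontal uz hur hρ hρpos
  obtain ⟨hv₁, hv₂⟩ := grad3_revolve_horizontal vz hvr hρ hρpos
  have hu₃ : grad3 (fun q => (revolve ur uz q).2.2) (x, y, z) = _ :=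
    grad3_comp_meridian huz hρ hρpos
  have hv₃ : grad3 (fun q => (revolve vr vz q).2.2) (x, y, z) = _ :=
    grad3_comp_meridian hvz hρ hρpos
  rw [jdot3_eq_sum_dotProduct_grad3, hu₁, hu₂, hu₃, hv₁, hv₂, hv₃,
    frobenius_identity_of_sq_add_sq_eq_one _ _ _ _ _ _ _ _ _ _ _ _ hcs, jdot2]
  ring

end Cylindrical

/-- Frobenius inner product of the Jacobians of two revolved fields:
`Dû : Dv̂ = ∇u : ∇v + u_r v_r / ρ²`, and in particular
`‖Dû‖_F² = ‖∇u‖_F² + (u_r/ρ)²`. -/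
theorem jacobian_frobenius_of_revolved_fields
    (ur uz vr vz : ℝ × ℝ → ℝ)
    (hur : ContDiffOn ℝ 1 ur {p : ℝ × ℝ | 0 < p.1})
    (huz : ContDiffOn ℝ 1 uz {p : ℝ × ℝ | 0 < p.1})
    (hvr : ContDiffOn ℝ 1 vr {p : ℝ × ℝ | 0 < p.1})
    (hvz : ContDiffOn ℝ 1 vz {p : ℝ × ℝ | 0 < p.1})
    (x y z ρ : ℝ) (hρ : ρ = Real.sqrt (x ^ 2 + y ^ 2)) (hρpos : 0 < ρ) :
    (jdot3 (revolve ur uz) (revolve vr vz) (x, y, z)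
      = jdot2 (fun p => (ur p, uz p)) (fun p => (vr p, vz p)) (ρ, z)
        + ur (ρ, z) * vr (ρ, z) / ρ ^ 2)
    ∧ (jdot3 (revolve ur uz) (revolve ur uz) (x, y, z)
      = jdot2 (fun p => (ur p, uz p)) (fun p => (ur p, uz p)) (ρ, z)
        + (ur (ρ, z) / ρ) ^ 2) := by
  have hdiff {f : ℝ × ℝ → ℝ} (hf : ContDiffOn ℝ 1 f {p : ℝ × ℝ | 0 < p.1}) :
      DifferentiableAt ℝ f (ρ, z) :=
    (hf.contDiffAt ((isOpen_lt continuous_const continuous_fst).mem_nhds hρpos)).differentiableAt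
      one_ne_zero
  refine ⟨jdot3_revolve (hdiff hur) (hdiff huz) (hdiff hvr) (hdiff hvz) hρ.symm hρpos, ?_⟩
  rw [jdot3_revolve (hdiff hur) (hdiff huz) (hdiff hur) (hdiff huz) hρ.symm hρpos]
  ring
end
end

section
/- Let θ ∈ (0, π/2), z_j ∈ ℝ, and let T ⊂ ℝ² be a triangle with one vertex at (0, z_j) that is contained in the cone {(r,z) : r ≥ 0 and |z − z_j| ≤ r·tan θ}. Then ∫_T (r² + (z − z_j)²) / r dr dz ≤ (1 + tan²θ) · h_T³, where h_T := diam(T). -/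
open MeasureTheory

noncomputable section

/-- The Euclidean norm on `ℝ²`. -/
def euclNorm (a : ℝ × ℝ) : ℝ := Real.sqrt (a.1 ^ 2 + a.2 ^ 2)

/-- The diameter `h_T` of the triangle with vertices `A`, `B`, `C`
(the maximum edge length). -/
def diamT (A B C : ℝ × ℝ) : ℝ :=
  max (euclNorm (B - A)) (max (euclNorm (C - A)) (euclNorm (C - B)))

lemma dist_le_euclNorm (P Q : ℝ × ℝ) : dist P Q ≤ euclNorm (P - Q) := by
  rw [Prod.dist_eq]
  unfold euclNorm
  have h1 : dist P.1 Q.1 ≤ Real.sqrt ((P - Q).1 ^ 2 + (P - Q).2 ^ 2) := by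
    rw [Real.dist_eq, ← Real.sqrt_sq_eq_abs]
    apply Real.sqrt_le_sqrt
    simp only [Prod.fst_sub, Prod.snd_sub]
    nlinarith [sq_nonneg (P.2 - Q.2)]
  have h2 : dist P.2 Q.2 ≤ Real.sqrt ((P - Q).1 ^ 2 + (P - Q).2 ^ 2) := by
    rw [Real.dist_eq, ← Real.sqrt_sq_eq_abs]
    apply Real.sqrt_le_sqrt
    simp only [Prod.fst_sub, Prod.snd_sub]
    nlinarith [sq_nonneg (P.1 - Q.1)]
  exact max_le h1 h2

lemma euclNorm_nonneg (a : ℝ × ℝ) : 0 ≤ euclNorm a := Real.sqrt_nonneg _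

/-- For a triangle `T` with one vertex at `(0, z_j)` contained in the cone
`{(r,z) : r ≥ 0, |z − z_j| ≤ r tan θ}` with `θ ∈ (0, π/2)`, one has
`∫_T (r² + (z − z_j)²)/r dr dz ≤ (1 + tan² θ) h_T³`. -/
theorem cone_weighted_integral_bound
    (θ zj : ℝ) (hθ0 : 0 < θ) (hθ : θ < Real.pi / 2)
    (A B C : ℝ × ℝ) (hA : A = (0, zj))
    (hind : AffineIndependent ℝ ![A, B, C])
    (hcone : convexHull ℝ {A, B, C} ⊆
      {p : ℝ × ℝ | 0 ≤ p.1 ∧ |p.2 - zj| ≤ p.1 * Real.tan θ}) :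
    (∫⁻ p in convexHull ℝ {A, B, C},
        ENNReal.ofReal ((p.1 ^ 2 + (p.2 - zj) ^ 2) / p.1))
      ≤ ENNReal.ofReal ((1 + Real.tan θ ^ 2) * diamT A B C ^ 3) := by
  set t := Real.tan θ with ht
  set h := diamT A B C with hhdef
  have hh0 : 0 ≤ h := le_trans (euclNorm_nonneg _) (le_max_left _ _)
  -- hull inside closed ball of radius h around A
  have hball : convexHull ℝ {A, B, C} ⊆ Metric.closedBall A h := by
    apply convexHull_min _ (convex_closedBall _ _)
    intro x hx
    simp only [Set.mem_insert_iff, Set.mem_singleton_iff] at hx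
    rcases hx with rfl | rfl | rfl
    · simp [Metric.mem_closedBall, hh0]
    · exact Metric.mem_closedBall.2 <| (dist_le_euclNorm _ _).trans (le_max_left _ _)
    · exact Metric.mem_closedBall.2 <| (dist_le_euclNorm _ _).trans
        ((le_max_left _ _).trans (le_max_right _ _))
  -- hull inside the rectangle R
  set R : Set (ℝ × ℝ) := Set.Icc 0 h ×ˢ Set.Icc (zj - h) (zj + h) with hR
  have hsubR : convexHull ℝ {A, B, C} ⊆ R := by
    intro p hp
    have hb := hball hp
    have hc := hcone hp
    rw [Metric.mem_closedBall, Prod.dist_eq, hA] at hb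
    have h1 : |p.1 - 0| ≤ h := le_trans (le_max_left _ _) hb
    have h2 : |p.2 - zj| ≤ h := le_trans (le_max_right _ _) hb
    rw [sub_zero] at h1
    constructor
    · exact ⟨hc.1, (abs_le.1 h1).2⟩
    · have := abs_le.1 h2
      constructor <;> linarith [this.1, this.2]
  -- pointwise bound on the hull
  have hpt : ∀ p ∈ convexHull ℝ ({A, B, C} : Set (ℝ × ℝ)),
      ENNReal.ofReal ((p.1 ^ 2 + (p.2 - zj) ^ 2) / p.1)
        ≤ ENNReal.ofReal ((1 + t ^ 2) * p.1) := by
    intro p hp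
    obtain ⟨hr, hcw⟩ := hcone hp
    apply ENNReal.ofReal_le_ofReal
    rcases eq_or_lt_of_le hr with heq | hlt
    · have : p.2 - zj = 0 := by
        have : |p.2 - zj| ≤ 0 := by simpa [← heq] using hcw
        have := abs_nonneg (p.2 - zj)
        have : |p.2 - zj| = 0 := le_antisymm ‹|p.2 - zj| ≤ 0› this
        exact abs_eq_zero.1 this
      simp [← heq, this]
    · rw [div_le_iff₀ hlt]
      have hw := abs_le.1 hcw
      nlinarith [hw.1, hw.2, sq_nonneg (p.2 - zj)]
  -- measurability
  have hgmeas : Measurable fun p : ℝ × ℝ => ENNReal.ofReal ((1 + t ^ 2) * p.1) := by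
    exact (measurable_const.mul measurable_fst).ennreal_ofReal
  calc (∫⁻ p in convexHull ℝ {A, B, C},
        ENNReal.ofReal ((p.1 ^ 2 + (p.2 - zj) ^ 2) / p.1))
      ≤ ∫⁻ p in convexHull ℝ {A, B, C}, ENNReal.ofReal ((1 + t ^ 2) * p.1) :=
        setLIntegral_mono hgmeas hpt
    _ ≤ ∫⁻ p in R, ENNReal.ofReal ((1 + t ^ 2) * p.1) :=
        lintegral_mono_set hsubR
    _ = ENNReal.ofReal (1 + t ^ 2) * ∫⁻ p in R, ENNReal.ofReal p.1 := by
        rw [← lintegral_const_mul _ (measurable_fst.ennreal_ofReal)]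
        congr 1
        ext p
        rw [ENNReal.ofReal_mul (by positivity)]
    _ ≤ ENNReal.ofReal ((1 + t ^ 2) * h ^ 3) := by
        have hprod : (∫⁻ p in R, ENNReal.ofReal p.1)
            = (∫⁻ x in Set.Icc (0:ℝ) h, ENNReal.ofReal x) *
              volume (Set.Icc (zj - h) (zj + h)) := by
          rw [hR, Measure.volume_eq_prod, ← Measure.prod_restrict,
            MeasureTheory.lintegral_prod _ (measurable_fst.ennreal_ofReal).aemeasurable]
          simp only [lintegral_const, Measure.restrict_apply, MeasurableSet.univ,
            Set.univ_inter]
          exact lintegral_mul_const' _ _ (by simp)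
        have hid : (∫⁻ x in Set.Icc (0:ℝ) h, ENNReal.ofReal x)
            = ENNReal.ofReal (h ^ 2 / 2) := by
          rw [← ofReal_integral_eq_lintegral_ofReal]
          · congr 1
            rw [MeasureTheory.integral_Icc_eq_integral_Ioc,
              ← intervalIntegral.integral_of_le hh0]
            simpa using intervalIntegral.integral_id (a := 0) (b := h)
          · exact (intervalIntegrable_iff_integrableOn_Icc_of_le hh0).1
              (intervalIntegral.intervalIntegrable_id)
          · filter_upwards [self_mem_ae_restrict measurableSet_Icc] with x hx
            exact hx.1
        rw [hprod, hid, Real.volume_Icc]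
        rw [← ENNReal.ofReal_mul (by positivity), ← ENNReal.ofReal_mul (by positivity)]
        apply ENNReal.ofReal_le_ofReal
        have : zj + h - (zj - h) = 2 * h := by ring
        rw [this]
        nlinarith [sq_nonneg t, hh0]
end
end

section
/- Let T ⊂ ℝ² be a triangle, E an edge of T with length |E|, and x_E the vertex of T opposite to E. Then for every C¹ scalar function f defined on a neighborhood of the closure of T, the trace identity ∫_E f ds = (|E| / |T|) ∫_T f(x) dx + (|E| / (2|T|)) ∫_T ∇f(x) · (x − x_E) dx holds, where |T| is the area of T, ∫_E · ds the arclength integral over E, and the right-hand integrals are with respect to two-dimensional Lebesgue measure. -/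
/-!
In the coordinates `x = C + r • (A + t • (B - A) - C)`, `(t, r) ∈ [0, 1]²`, which collapse the
side `r = 0` to the vertex `C`, Lebesgue measure on `T` becomes `2 |T| r dt dr`, and
`2 f(x) + ∇f(x) · (x - C)` becomes `r⁻¹ ∂ᵣ (r² f(x))`. Integrating first in `r` therefore gives
`2 ∫_T f + ∫_T ∇f · (x - C) = 2 |T| ∫₀¹ f(A + t (B - A)) dt`, and the right-hand side is
`(2 |T| / |E|) ∫_E f ds`.
-/

open MeasureTheory

noncomputable section

/-- The Euclidean dot product on `ℝ²`. -/
def dot2 (a b : ℝ × ℝ) : ℝ := a.1 * b.1 + a.2 * b.2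

/-- The arclength integral `∫_{[A,B]} f ds` over the segment from `A` to `B`. -/
def lineIntegral (f : ℝ × ℝ → ℝ) (A B : ℝ × ℝ) : ℝ :=
  Real.sqrt (dot2 (B - A) (B - A)) * ∫ t in (0:ℝ)..1, f (A + t • (B - A))

/-- The length `|E|` of the segment `[A,B]`. -/
def edgeLen (A B : ℝ × ℝ) : ℝ := Real.sqrt (dot2 (B - A) (B - A))

/-- The area `|T|` of the triangle with vertices `A`, `B`, `C`. -/
def areaT (A B C : ℝ × ℝ) : ℝ :=
  |(B.1 - A.1) * (C.2 - A.2) - (B.2 - A.2) * (C.1 - A.1)| / 2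

open Set

def cross2 (u v : ℝ × ℝ) : ℝ := u.1 * v.2 - u.2 * v.1

lemma areaT_eq (A B C : ℝ × ℝ) : areaT A B C = |cross2 (B - A) (C - A)| / 2 := rfl

lemma ContinuousLinearMap.det_eq_cross2 (M : (ℝ × ℝ) →L[ℝ] (ℝ × ℝ)) :
    M.det = cross2 (M (1, 0)) (M (0, 1)) := by
  show LinearMap.det _ = _
  rw [← LinearMap.det_toMatrix (Module.Basis.finTwoProd ℝ), Matrix.det_fin_two]
  simp [LinearMap.toMatrix_apply, Module.Basis.coe_finTwoProd_repr, cross2, mul_comm]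

lemma cross2_ne_zero_of_affineIndependent {A B C : ℝ × ℝ}
    (h : AffineIndependent ℝ ![A, B, C]) : cross2 (B - A) (C - A) ≠ 0 := by
  have hli : LinearIndependent ℝ ![B - A, C - A] := by
    rw [affineIndependent_iff_linearIndependent_vsub ℝ _ (0 : Fin 3),
      ← linearIndependent_equiv (finSuccAboveEquiv (0 : Fin 3))] at h
    convert! h using 1
    funext i
    fin_cases i <;> rfl
  intro h0
  let L : (ℝ × ℝ) →L[ℝ] (ℝ × ℝ) :=
    (ContinuousLinearMap.fst ℝ ℝ ℝ).smulRight (B - A) +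
      (ContinuousLinearMap.snd ℝ ℝ ℝ).smulRight (C - A)
  have hL : LinearMap.det (L : (ℝ × ℝ) →ₗ[ℝ] (ℝ × ℝ)) = 0 := by
    rw [← ContinuousLinearMap.det, L.det_eq_cross2]
    simpa [L, cross2] using h0
  obtain ⟨x, hx, hx0⟩ := Submodule.ne_bot_iff _ |>.1 (LinearMap.det_eq_zero_iff_ker_ne_bot.1 hL)
  have := LinearIndependent.pair_iff.1 hli x.1 x.2 (by simpa [L] using hx)
  exact hx0 (Prod.ext this.1 this.2)

section TriangleParam

variable (A B C : ℝ × ℝ)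

def triangleParam (p : ℝ × ℝ) : ℝ × ℝ := C + p.2 • (A - C + p.1 • (B - A))

lemma triangleParam_eq (p : ℝ × ℝ) :
    triangleParam A B C p = (1 - p.2) • C + p.2 • ((1 - p.1) • A + p.1 • B) := by
  unfold triangleParam; module

lemma mapsTo_triangleParam :
    MapsTo (triangleParam A B C) (Icc 0 1 ×ˢ Icc 0 1) (convexHull ℝ {A, B, C}) := by
  rintro p ⟨⟨ht0, ht1⟩, ⟨hr0, hr1⟩⟩
  have hT := convex_convexHull ℝ ({A, B, C} : Set (ℝ × ℝ))
  have hA : A ∈ convexHull ℝ {A, B, C} := subset_convexHull ℝ _ (by simp)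
  have hB : B ∈ convexHull ℝ {A, B, C} := subset_convexHull ℝ _ (by simp)
  have hC : C ∈ convexHull ℝ {A, B, C} := subset_convexHull ℝ _ (by simp)
  rw [triangleParam_eq]
  exact hT hC (hT hA hB (by linarith) ht0 (by ring)) (by linarith) hr0 (by ring)

lemma convexHull_subset_image_triangleParam :
    convexHull ℝ {A, B, C} ⊆ triangleParam A B C '' (Icc 0 1 ×ˢ Ioc 0 1) ∪ {C} := by
  intro x hx
  rw [show ({A, B, C} : Set (ℝ × ℝ)) = insert C {A, B} by grind,
    convexHull_insert (insert_nonempty A {B}), convexHull_pair, mem_convexJoin] at hx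
  obtain ⟨C, rfl, z, hz, hx⟩ := hx
  rw [segment_eq_image'] at hz hx
  obtain ⟨t, ht, rfl⟩ := hz
  obtain ⟨r, ⟨hr0, hr1⟩, rfl⟩ := hx
  rcases hr0.eq_or_lt with rfl | hr0
  · simp
  · exact Or.inl ⟨(t, r), ⟨ht, hr0, hr1⟩, by unfold triangleParam; module⟩

lemma image_triangleParam_ae_eq :
    triangleParam A B C '' (Icc 0 1 ×ˢ Ioc 0 1) =ᵐ[volume] convexHull ℝ {A, B, C} := by
  refine ae_eq_set.2 ⟨?_, ?_⟩
  · rw [sdiff_eq_empty.2 ((mapsTo_triangleParam A B C).mono_left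
      (prod_mono subset_rfl Ioc_subset_Icc_self)).image_subset]
    exact measure_empty
  · refine measure_mono_null (fun x hx => ?_) (measure_singleton C)
    simpa [hx.2] using convexHull_subset_image_triangleParam A B C hx.1

lemma hasFDerivAt_triangleParam (p : ℝ × ℝ) :
    HasFDerivAt (triangleParam A B C)
      (p.2 • (ContinuousLinearMap.fst ℝ ℝ ℝ).smulRight (B - A) +
        (ContinuousLinearMap.snd ℝ ℝ ℝ).smulRight (A - C + p.1 • (B - A))) p := by
  have hfst : HasFDerivAt (Prod.fst : ℝ × ℝ → ℝ) (ContinuousLinearMap.fst ℝ ℝ ℝ) p :=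
    hasFDerivAt_fst
  exact (hasFDerivAt_snd.smul ((hfst.smul_const (B - A)).const_add (A - C))).const_add C

lemma det_fderiv_triangleParam (p : ℝ × ℝ) :
    (p.2 • (ContinuousLinearMap.fst ℝ ℝ ℝ).smulRight (B - A) +
        (ContinuousLinearMap.snd ℝ ℝ ℝ).smulRight (A - C + p.1 • (B - A))).det
      = -(p.2 * cross2 (B - A) (C - A)) := by
  rw [ContinuousLinearMap.det_eq_cross2]
  simp only [cross2, add_apply, smul_apply, ContinuousLinearMap.smulRight_apply,
    ContinuousLinearMap.coe_fst', ContinuousLinearMap.coe_snd', Prod.fst_add, Prod.snd_add,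
    Prod.fst_sub, Prod.snd_sub, Prod.smul_fst, Prod.smul_snd, smul_eq_mul]
  ring

lemma injOn_triangleParam (hd : cross2 (B - A) (C - A) ≠ 0) :
    InjOn (triangleParam A B C) {p | p.2 ≠ 0} := by
  intro p hp q hq hpq
  simp only [triangleParam, Prod.ext_iff, Prod.fst_add, Prod.snd_add, Prod.smul_fst,
    Prod.smul_snd, Prod.fst_sub, Prod.snd_sub, smul_eq_mul] at hpq
  obtain ⟨e1, e2⟩ := hpq
  have hr : p.2 = q.2 := by
    refine mul_right_cancel₀ hd ?_
    unfold cross2; simp only [Prod.fst_sub, Prod.snd_sub]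
    linear_combination (B.2 - A.2) * e1 - (B.1 - A.1) * e2
  rw [← hr] at e1 e2
  have ht : p.1 = q.1 := by
    refine mul_left_cancel₀ hp (mul_right_cancel₀ hd ?_)
    unfold cross2; simp only [Prod.fst_sub, Prod.snd_sub]
    linear_combination (C.2 - A.2) * e1 - (C.1 - A.1) * e2
  exact Prod.ext ht hr

end TriangleParam

lemma setIntegral_convexHull_eq_triangleParam {F : Type*} [NormedAddCommGroup F]
    [NormedSpace ℝ F] {A B C : ℝ × ℝ} (hd : cross2 (B - A) (C - A) ≠ 0) (g : ℝ × ℝ → F) :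
    ∫ x in convexHull ℝ {A, B, C}, g x
      = ∫ p in Icc (0 : ℝ) 1 ×ˢ Ioc (0 : ℝ) 1,
          (p.2 * |cross2 (B - A) (C - A)|) • g (triangleParam A B C p) := by
  have hs : MeasurableSet (Icc (0 : ℝ) 1 ×ˢ Ioc (0 : ℝ) 1) :=
    measurableSet_Icc.prod measurableSet_Ioc
  rw [← setIntegral_congr_set (image_triangleParam_ae_eq A B C),
    integral_image_eq_integral_abs_det_fderiv_smul volume hs
      (fun p _ => (hasFDerivAt_triangleParam A B C p).hasFDerivWithinAt)
      ((injOn_triangleParam A B C hd).mono fun p hp => hp.2.1.ne')]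
  refine setIntegral_congr_fun hs fun p hp => ?_
  rw [det_fderiv_triangleParam, abs_neg, abs_mul, abs_of_pos hp.2.1]

lemma integral_deriv_sq_mul_along_ray {E : Type*} [NormedAddCommGroup E] [NormedSpace ℝ E]
    {f : E → ℝ} {U : Set E} (hU : IsOpen U) (hf : ContDiffOn ℝ 1 f U) {c w : E}
    (hcw : ∀ r ∈ Icc (0 : ℝ) 1, c + r • w ∈ U) :
    ∫ r in (0 : ℝ)..1, r * (2 * f (c + r • w) + fderiv ℝ f (c + r • w) (r • w)) = f (c + w) := by
  have hray : ContinuousOn (fun r : ℝ => c + r • w) (Icc 0 1) := by fun_prop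
  have hderiv : ∀ r ∈ Icc (0 : ℝ) 1, HasDerivAt (fun r : ℝ => r ^ 2 * f (c + r • w))
      (r * (2 * f (c + r • w) + fderiv ℝ f (c + r • w) (r • w))) r := by
    intro r hr
    have hfr : HasFDerivAt f (fderiv ℝ f (c + r • w)) (c + r • w) :=
      ((hf.differentiableOn one_ne_zero).differentiableAt (hU.mem_nhds (hcw r hr))).hasFDerivAt
    have hline : HasDerivAt (fun r : ℝ => c + r • w) w r := by
      simpa using ((hasDerivAt_id r).smul_const w).const_add c
    refine ((hasDerivAt_pow 2 r).mul (hfr.comp_hasDerivAt r hline)).congr_deriv ?_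
    rw [map_smul, smul_eq_mul, Function.comp_apply]
    push_cast
    ring
  have hint : ContinuousOn
      (fun r : ℝ => r * (2 * f (c + r • w) + fderiv ℝ f (c + r • w) (r • w))) (Icc 0 1) :=
    continuousOn_id.mul ((continuousOn_const.mul (hf.continuousOn.comp hray hcw)).add
      (((hf.continuousOn_fderiv_of_isOpen hU le_rfl).comp hray hcw).clm_apply
        (continuousOn_id.smul continuousOn_const)))
  rw [← uIcc_of_le zero_le_one] at hderiv hint
  rw [intervalIntegral.integral_eq_sub_of_hasDerivAt hderiv hint.intervalIntegrable]
  simp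

theorem two_mul_integral_add_integral_fderiv_eq {A B C : ℝ × ℝ}
    (hind : AffineIndependent ℝ ![A, B, C]) {U : Set (ℝ × ℝ)} (hU : IsOpen U)
    (hTU : convexHull ℝ {A, B, C} ⊆ U) {f : ℝ × ℝ → ℝ} (hf : ContDiffOn ℝ 1 f U) :
    2 * (∫ x in convexHull ℝ {A, B, C}, f x)
        + ∫ x in convexHull ℝ {A, B, C}, fderiv ℝ f x (x - C)
      = |cross2 (B - A) (C - A)| * ∫ t in (0 : ℝ)..1, f (A + t • (B - A)) := by
  set d := cross2 (B - A) (C - A)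
  set T := convexHull ℝ {A, B, C}
  let g : ℝ × ℝ → ℝ := fun x => 2 * f x + fderiv ℝ f x (x - C)
  have hT : IsCompact T := ((finite_singleton C).insert B |>.insert A).isCompact_convexHull ℝ
  have hfc : ContinuousOn f T := hf.continuousOn.mono hTU
  have hdfc : ContinuousOn (fun x => fderiv ℝ f x (x - C)) T :=
    ((hf.continuousOn_fderiv_of_isOpen hU le_rfl).mono hTU).clm_apply
      (continuousOn_id.sub continuousOn_const)
  have hint : IntegrableOn (fun p => (p.2 * |d|) • g (triangleParam A B C p))
      (Icc (0 : ℝ) 1 ×ˢ Ioc (0 : ℝ) 1) := by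
    refine ContinuousOn.integrableOn_compact (isCompact_Icc.prod isCompact_Icc) ?_
      |>.mono_set (prod_mono subset_rfl Ioc_subset_Icc_self)
    refine (by fun_prop : Continuous fun p : ℝ × ℝ => p.2 * |d|).continuousOn.smul ?_
    exact ((continuousOn_const.mul hfc).add hdfc).comp (by unfold triangleParam; fun_prop)
      (mapsTo_triangleParam A B C)
  have hray : ∀ t ∈ Icc (0 : ℝ) 1,
      ∫ r in Ioc (0 : ℝ) 1, (r * |d|) • g (triangleParam A B C (t, r))
        = |d| * f (A + t • (B - A)) := by
    intro t ht
    have hmem : ∀ r ∈ Icc (0 : ℝ) 1, C + r • (A - C + t • (B - A)) ∈ U :=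
      fun r hr => hTU (mapsTo_triangleParam A B C (show (t, r) ∈ _ from ⟨ht, hr⟩))
    have hend : C + (A - C + t • (B - A)) = A + t • (B - A) := by abel
    rw [← intervalIntegral.integral_of_le zero_le_one, ← hend,
      ← integral_deriv_sq_mul_along_ray hU hf hmem, ← intervalIntegral.integral_const_mul]
    refine intervalIntegral.integral_congr fun r _ => ?_
    simp only [g, triangleParam, smul_eq_mul, add_sub_cancel_left]
    ring
  calc 2 * (∫ x in T, f x) + ∫ x in T, fderiv ℝ f x (x - C)
      = ∫ x in T, g x := by
        rw [integral_add ((hfc.integrableOn_compact hT).const_mul 2)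
          (hdfc.integrableOn_compact hT), integral_const_mul]
    _ = ∫ p in Icc (0 : ℝ) 1 ×ˢ Ioc (0 : ℝ) 1, (p.2 * |d|) • g (triangleParam A B C p) :=
        setIntegral_convexHull_eq_triangleParam (cross2_ne_zero_of_affineIndependent hind) g
    _ = ∫ t in Icc (0 : ℝ) 1,
          ∫ r in Ioc (0 : ℝ) 1, (r * |d|) • g (triangleParam A B C (t, r)) := by
        rw [Measure.volume_eq_prod] at hint ⊢
        exact setIntegral_prod _ hint
    _ = ∫ t in Icc (0 : ℝ) 1, |d| * f (A + t • (B - A)) :=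
        setIntegral_congr_fun measurableSet_Icc hray
    _ = |d| * ∫ t in (0 : ℝ)..1, f (A + t • (B - A)) := by
        rw [integral_Icc_eq_integral_Ioc, ← intervalIntegral.integral_of_le zero_le_one,
          intervalIntegral.integral_const_mul]

/-- The trace identity on a triangle `T` with edge `E = [A,B]` and opposite vertex `C`:
`∫_E f ds = (|E|/|T|) ∫_T f + (|E|/(2|T|)) ∫_T ∇f · (x − x_E)` for every `C¹` function `f`
on a neighborhood of the closure of `T`. -/
theorem trace_identity
    (A B C : ℝ × ℝ) (hind : AffineIndependent ℝ ![A, B, C])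
    (U : Set (ℝ × ℝ)) (hU : IsOpen U) (hTU : convexHull ℝ {A, B, C} ⊆ U)
    (f : ℝ × ℝ → ℝ) (hf : ContDiffOn ℝ 1 f U) :
    lineIntegral f A B
      = (edgeLen A B / areaT A B C) * (∫ p in convexHull ℝ {A, B, C}, f p)
        + (edgeLen A B / (2 * areaT A B C)) *
            ∫ p in convexHull ℝ {A, B, C}, fderiv ℝ f p (p - C) := by
  have hd : |cross2 (B - A) (C - A)| ≠ 0 :=
    abs_ne_zero.2 (cross2_ne_zero_of_affineIndependent hind)
  have key := two_mul_integral_add_integral_fderiv_eq hind hU hTU hf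
  rw [lineIntegral, ← edgeLen, areaT_eq]
  field_simp
  linear_combination -edgeLen A B * key
end
end
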